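/- Let n ≥ 1 and let (p_{β,γ})_{β∈ℤ²} ⊂ M_n(ℂ), depending on a parameter γ ∈ ℝ∖{0}, satisfy: (i) for every N ∈ ℕ there is C_N > 0 with ‖p_{β,γ}‖ ≤ C_N(1+|β₁|+|β₂|)^{−N} for all β and γ, and (ii) p_{−β,γ} = p_{β,γ}* for all β and γ. Then the bounded operators A_γ and Q_γ on ℓ²(ℤ²;ℂⁿ) are unitarily equivalent: there is a unitary operator U on ℓ²(ℤ²;ℂⁿ) with U A_γ U* = Q_γ (one may take the diagonal unitary (Uv)_α = e^{iγα₁α₂/2} v_α). -/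

import Mathlib

/- STATEMENT 0: the bounded operators `A_γ` and `Q_γ` on `ℓ²(ℤ²;ℂⁿ)` attached to a rapidly
decaying, self-adjoint family of matrix coefficients `p_{β,γ}` are unitarily equivalent. -/

open Complex Matrix

attribute [local instance] Matrix.normedAddCommGroup

noncomputable section

/-- `ℓ²(ℤ²;ℂⁿ)`. -/
abbrev lpZ2 (n : ℕ) : Type := lp (fun _ : ℤ × ℤ => EuclideanSpace ℂ (Fin n)) 2

/-!
Conjugating by the diagonal unitary `(Uv)_α = e^{iγα₁α₂/2} v_α` multiplies the kernel of `A_γ`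
by `e^{iγ(α₁α₂ − β₁β₂)/2}`. Writing `β = α − β'`, the total phase
`(γ/2)(α₁α₂ − β₁β₂ − α∧β)` equals `(γ/2)β'₁β'₂ + γ(α₁ − β'₁)β'₂`, which is exactly the phase
of the term `β'` in `Q_γ`.
-/

open scoped ENNReal

namespace lp

variable {ι : Type*} {E : ι → Type*} [∀ i, NormedAddCommGroup (E i)] [∀ i, NormedSpace ℂ (E i)]
  {p : ℝ≥0∞}

theorem _root_.Memℓp.circle_smul (u : ι → Circle) {f : ∀ i, E i} (hf : Memℓp f p) :
    Memℓp (fun i => u i • f i) p :=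
  hf.mono' fun _ => (Circle.norm_smul _ _).le

variable [Fact (1 ≤ p)]

variable (E p) in
def circleSMul (u : ι → Circle) : lp E p ≃ₗᵢ[ℂ] lp E p where
  toFun v := ⟨fun i => u i • v i, (lp.memℓp v).circle_smul u⟩
  invFun v := ⟨fun i => (u i)⁻¹ • v i, (lp.memℓp v).circle_smul _⟩
  map_add' v w := lp.ext <| funext fun i => smul_add (u i) (v i) (w i)
  map_smul' c v := lp.ext <| funext fun i => smul_comm (u i) c (v i)
  left_inv v := lp.ext <| funext fun i => inv_smul_smul (u i) (v i)
  right_inv v := lp.ext <| funext fun i => smul_inv_smul (u i) (v i)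
  norm_map' _ :=
    have hp : p ≠ 0 := (zero_lt_one.trans_le Fact.out).ne'
    le_antisymm (lp.norm_mono hp fun _ => (Circle.norm_smul _ _).le)
      (lp.norm_mono hp fun _ => (Circle.norm_smul _ _).ge)

@[simp]
theorem circleSMul_apply (u : ι → Circle) (v : lp E p) (i : ι) :
    circleSMul E p u v i = u i • v i :=
  rfl

@[simp]
theorem circleSMul_symm_apply (u : ι → Circle) (v : lp E p) (i : ι) :
    (circleSMul E p u).symm v i = (u i)⁻¹ • v i :=
  rfl

end lp

def magneticPhase (γ : ℝ) (α : ℤ × ℤ) : Circle := Circle.exp (γ * α.1 * α.2 / 2)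

theorem magneticPhase_conj (γ : ℝ) (α β : ℤ × ℤ) :
    (magneticPhase γ α : ℂ) *
        Complex.exp (-Complex.I * ((γ : ℂ)/2) * ((α.1 * (α - β).2 - α.2 * (α - β).1 : ℤ) : ℂ)) *
        ((magneticPhase γ (α - β))⁻¹ : Circle) =
      Complex.exp (Complex.I * (γ : ℂ) * ((β.1 * β.2 : ℤ) : ℂ) / 2) *
        Complex.exp (Complex.I * (γ : ℂ) * (((α.1 - β.1) * β.2 : ℤ) : ℂ)) := by
  simp only [magneticPhase, Circle.coe_inv, Circle.coe_exp, ← Complex.exp_neg, ← Complex.exp_add]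
  congr 1
  push_cast [Prod.fst_sub, Prod.snd_sub]
  ring

theorem stmt0_general (n : ℕ)
    (p : ℤ × ℤ → ℝ → Matrix (Fin n) (Fin n) ℂ)
    (γ : ℝ)
    (A Q : lpZ2 n →L[ℂ] lpZ2 n)
    -- `(A_γ)_{α,β} = e^{−i(γ/2) α∧β} p_{α−β,γ}`
    (hA : ∀ v : lpZ2 n, ∀ α : ℤ × ℤ, ∀ j : Fin n,
      (A v) α j = ∑' β : ℤ × ℤ,
        Complex.exp (-Complex.I * ((γ : ℂ)/2) * ((α.1 * β.2 - α.2 * β.1 : ℤ) : ℂ)) *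
          ∑ k : Fin n, p (α - β) γ j k * v β k)
    -- `Q_γ = Σ_β p_{β,γ} e^{iγβ₁β₂/2} τ₁^{β₁} τ₂^{β₂}`, i.e.
    -- `(Q_γ v)_α = Σ_β e^{iγβ₁β₂/2} e^{iγ(α₁−β₁)β₂} p_{β,γ} v_{α−β}`
    (hQ : ∀ v : lpZ2 n, ∀ α : ℤ × ℤ, ∀ j : Fin n,
      (Q v) α j = ∑' β : ℤ × ℤ,
        Complex.exp (Complex.I * (γ : ℂ) * ((β.1 * β.2 : ℤ) : ℂ) / 2) *
          Complex.exp (Complex.I * (γ : ℂ) * (((α.1 - β.1) * β.2 : ℤ) : ℂ)) *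
          ∑ k : Fin n, p β γ j k * v (α - β) k) :
    ∃ U : lpZ2 n ≃ₗᵢ[ℂ] lpZ2 n, ∀ v : lpZ2 n, U (A (U.symm v)) = Q v := by
  refine ⟨lp.circleSMul _ 2 (magneticPhase γ), fun v => ?_⟩
  ext α j
  rw [lp.circleSMul_apply, Circle.smul_def, PiLp.smul_apply, smul_eq_mul, hA, hQ,
    ← tsum_mul_left, ← (Equiv.subLeft α).tsum_eq]
  refine tsum_congr fun β => ?_
  simp only [Equiv.subLeft_apply, sub_sub_cancel, lp.circleSMul_symm_apply, Circle.smul_def,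
    PiLp.smul_apply, smul_eq_mul, ← magneticPhase_conj, Finset.mul_sum]
  exact Finset.sum_congr rfl fun _ _ => by ring

theorem stmt0 (n : ℕ) (hn : 1 ≤ n)
    (p : ℤ × ℤ → ℝ → Matrix (Fin n) (Fin n) ℂ)
    -- (i) rapid decay, uniformly in γ
    (hdecay : ∀ N : ℕ, ∃ C : ℝ, 0 < C ∧ ∀ β : ℤ × ℤ, ∀ γ : ℝ, γ ≠ 0 →
      ‖p β γ‖ ≤ C / ((1 + |β.1| + |β.2| : ℤ) : ℝ) ^ N)
    -- (ii) symmetry `p_{−β,γ} = p_{β,γ}*`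
    (hsym : ∀ β : ℤ × ℤ, ∀ γ : ℝ, γ ≠ 0 → p (-β) γ = (p β γ)ᴴ)
    (γ : ℝ) (hγ : γ ≠ 0)
    (A Q : lpZ2 n →L[ℂ] lpZ2 n)
    -- `(A_γ)_{α,β} = e^{−i(γ/2) α∧β} p_{α−β,γ}`
    (hA : ∀ v : lpZ2 n, ∀ α : ℤ × ℤ, ∀ j : Fin n,
      (A v) α j = ∑' β : ℤ × ℤ,
        Complex.exp (-Complex.I * ((γ : ℂ)/2) * ((α.1 * β.2 - α.2 * β.1 : ℤ) : ℂ)) *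
          ∑ k : Fin n, p (α - β) γ j k * v β k)
    -- `Q_γ = Σ_β p_{β,γ} e^{iγβ₁β₂/2} τ₁^{β₁} τ₂^{β₂}`, i.e.
    -- `(Q_γ v)_α = Σ_β e^{iγβ₁β₂/2} e^{iγ(α₁−β₁)β₂} p_{β,γ} v_{α−β}`
    (hQ : ∀ v : lpZ2 n, ∀ α : ℤ × ℤ, ∀ j : Fin n,
      (Q v) α j = ∑' β : ℤ × ℤ,
        Complex.exp (Complex.I * (γ : ℂ) * ((β.1 * β.2 : ℤ) : ℂ) / 2) *
          Complex.exp (Complex.I * (γ : ℂ) * (((α.1 - β.1) * β.2 : ℤ) : ℂ)) *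
          ∑ k : Fin n, p β γ j k * v (α - β) k) :
    ∃ U : lpZ2 n ≃ₗᵢ[ℂ] lpZ2 n, ∀ v : lpZ2 n, U (A (U.symm v)) = Q v :=
  stmt0_general n p γ A Q hA hQ
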